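/- Assume hypotheses (H1) and (H2). Then {□,⊞} is a metastable set in the sense of Bovier–Eckhoff–Gayrard–Klein: lim_{β→∞} [max_{η ∈ X∖{□,⊞}} μ_β(η)/CAP_β({η}, {□,⊞})] / [min_{η ∈ {□,⊞}} μ_β(η)/CAP_β({η}, {□,⊞}∖{η})] = 0. -/

import Mathlib

open scoped Classical

variable {X : Type*}

/-- `ω` (restricted to 0,…,L) is a path of allowed moves from `a` to `b`. -/
def IsPathW (rel : X → X → Prop) (a b : X) (L : ℕ) (ω : ℕ → X) : Prop :=
  ω 0 = a ∧ ω L = b ∧ ∀ i < L, rel (ω i) (ω (i + 1))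

/-- The maximal energy along the path `ω = (ω 0, …, ω L)`. -/
noncomputable def pathMax (H : X → ℝ) (L : ℕ) (ω : ℕ → X) : ℝ :=
  (Finset.range (L + 1)).sup' Finset.nonempty_range_add_one fun i => H (ω i)

/-- Communication height Φ(a,b) between two configurations. -/
noncomputable def commH (rel : X → X → Prop) (H : X → ℝ) (a b : X) : ℝ :=
  sInf { m : ℝ | ∃ L ω, IsPathW rel a b L ω ∧ m = pathMax H L ω }

/-- Communication height Φ(A,B) between two sets of configurations. -/
noncomputable def commHS (rel : X → X → Prop) (H : X → ℝ) (A B : Set X) : ℝ :=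
  sInf { m : ℝ | ∃ a ∈ A, ∃ b ∈ B, m = commH rel H a b }

/-- The graph (X,∼) is connected. -/
def ConnGraph (rel : X → X → Prop) : Prop :=
  ∀ a b : X, ∃ L ω, IsPathW rel a b L ω

/-- Partition function Z_β. -/
noncomputable def Zb [Fintype X] (H : X → ℝ) (β : ℝ) : ℝ :=
  ∑ ξ : X, Real.exp (-β * H ξ)

/-- Gibbs measure μ_β. -/
noncomputable def gibbs [Fintype X] (H : X → ℝ) (β : ℝ) (η : X) : ℝ :=
  Real.exp (-β * H η) / Zb H β

/-- Metropolis transition rates c_β. -/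
noncomputable def crate (rel : X → X → Prop) (H : X → ℝ) (β : ℝ) (η η' : X) : ℝ :=
  if rel η η' then Real.exp (-β * max (H η' - H η) 0) else 0

/-- Dirichlet form E_β(h). -/
noncomputable def dirE [Fintype X] (rel : X → X → Prop) (H : X → ℝ) (β : ℝ)
    (h : X → ℝ) : ℝ :=
  (1 / 2) * ∑ η : X, ∑ η' : X, gibbs H β η * crate rel H β η η' * (h η - h η') ^ 2

/-- Capacity CAP_β(A,B). -/
noncomputable def capB [Fintype X] (rel : X → X → Prop) (H : X → ℝ) (β : ℝ)
    (A B : Set X) : ℝ :=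
  sInf { e : ℝ | ∃ h : X → ℝ, (∀ η, 0 ≤ h η ∧ h η ≤ 1) ∧
    (∀ η ∈ A, h η = 1) ∧ (∀ η ∈ B, h η = 0) ∧ e = dirE rel H β h }

open Filter

/-! Capacities are governed by energy barriers alone. Along any path of length `L` and height
`M` from `A` to `B`, an admissible `h` drops by at least `1/L` across some edge, so
`CAP(A, B) ≳ e^{-βM}/Z`. Conversely, the indicator of the valley of `a` below `Φ(a, b)` jumps only
across edges of height at least `Φ(a, b)`, so `CAP(a, b) ≲ e^{-βΦ(a, b)}/Z`. Since `H ⊞ ≤ H □`, both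
`μ(□)/CAP(□, ⊞)` and `μ(⊞)/CAP(⊞, □)` are therefore `≳ e^{βΓ*}`. By (H2) and induction on the energy,
every other `η` descends to `{□, ⊞}` without exceeding `H η + V*`, so
`μ(η)/CAP(η, {□, ⊞}) ≲ e^{βV*}`, and the ratio is `O(e^{-β(Γ* - V*)})`. -/

section CommunicationHeight

variable {rel : X → X → Prop} {H : X → ℝ}

lemma le_pathMax (H : X → ℝ) {L : ℕ} (ω : ℕ → X) {i : ℕ} (hi : i ≤ L) :
    H (ω i) ≤ pathMax H L ω :=
  Finset.le_sup' (fun i => H (ω i)) (Finset.mem_range.2 (Nat.lt_succ_of_le hi))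

lemma pathMax_le {L : ℕ} {ω : ℕ → X} {M : ℝ} (h : ∀ i ≤ L, H (ω i) ≤ M) :
    pathMax H L ω ≤ M :=
  Finset.sup'_le _ _ fun i hi => h i (Nat.lt_succ_iff.1 (Finset.mem_range.1 hi))

lemma pathMax_mem_range (H : X → ℝ) (L : ℕ) (ω : ℕ → X) : pathMax H L ω ∈ Set.range H := by
  obtain ⟨i, -, h⟩ := Finset.exists_mem_eq_sup' Finset.nonempty_range_add_one fun i => H (ω i)
  exact ⟨ω i, h.symm⟩

lemma isPathW_refl (a : X) : IsPathW rel a a 0 fun _ => a :=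
  ⟨rfl, rfl, fun _ hi => absurd hi (Nat.not_lt_zero _)⟩

lemma isPathW_of_rel {a b : X} (h : rel a b) :
    IsPathW rel a b 1 fun i => if i = 0 then a else b := by
  refine ⟨rfl, rfl, fun i hi => ?_⟩
  obtain rfl : i = 0 := by omega
  simpa using h

lemma IsPathW.ne_zero {a b : X} {L : ℕ} {ω : ℕ → X} (hp : IsPathW rel a b L ω) (hab : a ≠ b) :
    L ≠ 0 := by
  rintro rfl
  exact hab (hp.1.symm.trans hp.2.1)

lemma IsPathW.append {a b c : X} {L₁ L₂ : ℕ} {ω₁ ω₂ : ℕ → X}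
    (h₁ : IsPathW rel a b L₁ ω₁) (h₂ : IsPathW rel b c L₂ ω₂) :
    IsPathW rel a c (L₁ + L₂) fun i => if i < L₁ then ω₁ i else ω₂ (i - L₁) := by
  obtain ⟨ha, hb, hs₁⟩ := h₁
  obtain ⟨hb', hc, hs₂⟩ := h₂
  refine ⟨?_, by simp [hc], fun i hi => ?_⟩
  · rcases Nat.eq_zero_or_pos L₁ with rfl | h0
    · simp [hb', ← hb, ha]
    · simp [h0, ha]
  rcases lt_trichotomy (i + 1) L₁ with h | h | h
  · simpa [h, (Nat.lt_succ_self i).trans h] using hs₁ i (by omega)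
  · have := hs₁ i (by omega)
    simp_all [show i < L₁ by omega]
  · simpa [show ¬ i < L₁ by omega, show ¬ i + 1 < L₁ by omega,
      show i + 1 - L₁ = i - L₁ + 1 by omega] using hs₂ (i - L₁) (by omega)

lemma IsPathW.reverse (hsymm : Symmetric rel) {a b : X} {L : ℕ} {ω : ℕ → X}
    (hp : IsPathW rel a b L ω) : IsPathW rel b a L fun i => ω (L - i) := by
  obtain ⟨ha, hb, hs⟩ := hp
  refine ⟨by simpa using hb, by simpa using ha, fun i hi => ?_⟩
  have h := hsymm (hs (L - (i + 1)) (by omega))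
  rwa [show L - (i + 1) + 1 = L - i by omega] at h

lemma commH_le_pathMax {a b : X} {L : ℕ} {ω : ℕ → X} (hp : IsPathW rel a b L ω) :
    commH rel H a b ≤ pathMax H L ω := by
  refine csInf_le ⟨H a, ?_⟩ ⟨L, ω, hp, rfl⟩
  rintro m ⟨L, ω, hp, rfl⟩
  simpa [hp.1] using le_pathMax H ω (Nat.zero_le L)

lemma exists_isPathW_pathMax_eq_commH [Finite X] (hconn : ConnGraph rel) (a b : X) :
    ∃ L ω, IsPathW rel a b L ω ∧ pathMax H L ω = commH rel H a b := by
  set s := { m : ℝ | ∃ L ω, IsPathW rel a b L ω ∧ m = pathMax H L ω }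
  obtain ⟨L, ω, hp⟩ := hconn a b
  have hfin : s.Finite := by
    refine (Set.finite_range H).subset ?_
    rintro m ⟨L, ω, -, rfl⟩
    exact pathMax_mem_range H L ω
  obtain ⟨L, ω, hp, hm⟩ := Set.Nonempty.csInf_mem (s := s) ⟨_, L, ω, hp, rfl⟩ hfin
  exact ⟨L, ω, hp, hm.symm⟩

lemma commH_self_le (a : X) : commH rel H a a ≤ H a :=
  (commH_le_pathMax (isPathW_refl a)).trans (pathMax_le fun _ _ => le_rfl)

lemma commH_le_max_of_rel {a b : X} (h : rel a b) : commH rel H a b ≤ max (H a) (H b) := by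
  refine (commH_le_pathMax (isPathW_of_rel h)).trans (pathMax_le fun i hi => ?_)
  interval_cases i <;> simp

lemma commH_le_max_commH [Finite X] (hconn : ConnGraph rel) (a b c : X) :
    commH rel H a c ≤ max (commH rel H a b) (commH rel H b c) := by
  obtain ⟨L₁, ω₁, hp₁, hm₁⟩ := exists_isPathW_pathMax_eq_commH (H := H) hconn a b
  obtain ⟨L₂, ω₂, hp₂, hm₂⟩ := exists_isPathW_pathMax_eq_commH (H := H) hconn b c
  refine (commH_le_pathMax (hp₁.append hp₂)).trans (pathMax_le fun i hi => ?_)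
  by_cases h : i < L₁
  · simpa [h, ← hm₁] using Or.inl (le_pathMax H ω₁ h.le)
  · simpa [h, ← hm₂] using Or.inr (le_pathMax H ω₂ (i := i - L₁) (by omega))

lemma commH_comm [Finite X] (hsymm : Symmetric rel) (hconn : ConnGraph rel) (a b : X) :
    commH rel H a b = commH rel H b a := by
  have key : ∀ x y : X, commH rel H y x ≤ commH rel H x y := fun x y => by
    obtain ⟨L, ω, hp, hm⟩ := exists_isPathW_pathMax_eq_commH (H := H) hconn x y
    refine (commH_le_pathMax (hp.reverse hsymm)).trans ?_
    exact hm ▸ pathMax_le fun i _ => le_pathMax H ω (Nat.sub_le L i)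
  exact le_antisymm (key b a) (key a b)

lemma exists_commH_eq_commHS [Finite X] (η : X) {I : Set X} (hI : I.Nonempty) :
    ∃ ξ ∈ I, commH rel H η ξ = commHS rel H {η} I := by
  have hset : { m : ℝ | ∃ a ∈ ({η} : Set X), ∃ b ∈ I, m = commH rel H a b }
      = (commH rel H η) '' I := by
    ext m
    simp [eq_comm]
  obtain ⟨ξ, hξ, h⟩ := (hI.image _).csInf_mem ((Set.toFinite I).image (commH rel H η))
  exact ⟨ξ, hξ, by rw [commHS, hset, h]⟩

lemma exists_mem_commH_le_add [Finite X] (hconn : ConnGraph rel) {S : Set X} {V : ℝ}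
    (hdesc : ∀ η ∉ S, ∃ ξ, H ξ < H η ∧ commH rel H η ξ ≤ H η + V) :
    ∀ η ∉ S, ∃ t ∈ S, commH rel H η t ≤ H η + V := by
  by_contra! hbad
  obtain ⟨η, ⟨hηS, hη⟩, hmin⟩ := Set.exists_min_image
    {η | η ∉ S ∧ ∀ t ∈ S, H η + V < commH rel H η t} H (Set.toFinite _) hbad
  obtain ⟨ξ, hξη, hηξ⟩ := hdesc η hηS
  by_cases hξS : ξ ∈ S
  · exact (hη ξ hξS).not_ge hηξ
  have : ∃ t ∈ S, commH rel H ξ t ≤ H ξ + V := by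
    by_contra! h
    exact (hmin ξ ⟨hξS, h⟩).not_gt hξη
  obtain ⟨t, htS, hξt⟩ := this
  refine (hη t htS).not_ge ((commH_le_max_commH hconn η ξ t).trans (max_le hηξ ?_))
  linarith

-- `a` is added by hand: `Φ(a, a) = H a` may well equal `Γ`.
def valley (rel : X → X → Prop) (H : X → ℝ) (a : X) (Γ : ℝ) : Set X :=
  insert a {ξ | commH rel H a ξ < Γ}

lemma le_max_of_rel_of_mem_valley [Finite X] (hconn : ConnGraph rel) {a η η' : X} {Γ : ℝ}
    (hr : rel η η') (hη : η ∈ valley rel H a Γ) (hη' : η' ∉ valley rel H a Γ) :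
    Γ ≤ max (H η) (H η') := by
  simp only [valley, Set.mem_insert_iff, Set.mem_ofPred_eq, not_or, not_lt] at hη hη'
  have hstep := (commH_le_max_commH hconn a η η').trans
    (max_le_max le_rfl (commH_le_max_of_rel (H := H) hr))
  rcases hη with rfl | hlt
  · exact hη'.2.trans (hstep.trans (max_le ((commH_self_le η).trans (le_max_left _ _)) le_rfl))
  · exact (le_max_iff.1 (hη'.2.trans hstep)).resolve_left hlt.not_ge

end CommunicationHeight

lemma exists_lt_le_sub_succ (f : ℕ → ℝ) {L : ℕ} (hL : L ≠ 0) :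
    ∃ i < L, (f 0 - f L) / L ≤ f i - f (i + 1) := by
  have hsum : ∑ _i ∈ Finset.range L, (f 0 - f L) / L ≤
      ∑ i ∈ Finset.range L, (f i - f (i + 1)) := by
    rw [Finset.sum_range_sub', Finset.sum_const, Finset.card_range, nsmul_eq_mul,
      mul_div_cancel₀ _ (Nat.cast_ne_zero.2 hL)]
  obtain ⟨i, hi, h⟩ := Finset.exists_le_of_sum_le (Finset.nonempty_range_iff.2 hL) hsum
  exact ⟨i, Finset.mem_range.1 hi, h⟩

lemma crate_nonneg (rel : X → X → Prop) (H : X → ℝ) (β : ℝ) (η η' : X) :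
    0 ≤ crate rel H β η η' := by
  unfold crate
  split_ifs
  exacts [(Real.exp_pos _).le, le_rfl]

section Capacity

variable [Fintype X] {rel : X → X → Prop} {H : X → ℝ} {β : ℝ}

lemma Zb_pos [Nonempty X] (H : X → ℝ) (β : ℝ) : 0 < Zb H β :=
  Finset.sum_pos (fun _ _ => Real.exp_pos _) Finset.univ_nonempty

lemma gibbs_nonneg (H : X → ℝ) (β : ℝ) (η : X) : 0 ≤ gibbs H β η :=
  div_nonneg (Real.exp_pos _).le (Finset.sum_nonneg fun _ _ => (Real.exp_pos _).le)

lemma gibbs_mul_crate {η η' : X} (hr : rel η η') :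
    gibbs H β η * crate rel H β η η' = Real.exp (-β * max (H η) (H η')) / Zb H β := by
  rw [gibbs, crate, if_pos hr, div_mul_eq_mul_div, ← Real.exp_add]
  congr 2
  rcases le_total (H η) (H η') with h | h
  · rw [max_eq_right h, max_eq_left (sub_nonneg.2 h)]
    ring
  · rw [max_eq_left h, max_eq_right (sub_nonpos.2 h)]
    ring

lemma dirE_term_nonneg (h : X → ℝ) (η η' : X) :
    0 ≤ gibbs H β η * crate rel H β η η' * (h η - h η') ^ 2 :=
  mul_nonneg (mul_nonneg (gibbs_nonneg H β η) (crate_nonneg rel H β η η')) (sq_nonneg _)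

lemma dirE_nonneg (h : X → ℝ) : 0 ≤ dirE rel H β h :=
  mul_nonneg (by norm_num)
    (Finset.sum_nonneg fun η _ => Finset.sum_nonneg fun η' _ => dirE_term_nonneg h η η')

lemma capB_nonneg (rel : X → X → Prop) (H : X → ℝ) (β : ℝ) (A B : Set X) :
    0 ≤ capB rel H β A B := by
  refine Real.sInf_nonneg ?_
  rintro e ⟨h, -, -, -, rfl⟩
  exact dirE_nonneg h

lemma capB_le_dirE {A B : Set X} {h : X → ℝ} (h01 : ∀ η, 0 ≤ h η ∧ h η ≤ 1)
    (hA : ∀ η ∈ A, h η = 1) (hB : ∀ η ∈ B, h η = 0) :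
    capB rel H β A B ≤ dirE rel H β h := by
  refine csInf_le ⟨0, ?_⟩ ⟨h, h01, hA, hB, rfl⟩
  rintro e ⟨h, -, -, -, rfl⟩
  exact dirE_nonneg h

lemma exp_mul_sq_le_dirE (h : X → ℝ) {η η' : X} (hr : rel η η') :
    Real.exp (-β * max (H η) (H η')) / Zb H β * (h η - h η') ^ 2 / 2 ≤ dirE rel H β h := by
  rw [← gibbs_mul_crate hr, dirE, div_eq_inv_mul, one_div]
  refine mul_le_mul_of_nonneg_left ?_ (by norm_num)
  let F : X → X → ℝ := fun a b => gibbs H β a * crate rel H β a b * (h a - h b) ^ 2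
  calc F η η' ≤ ∑ b, F η b :=
        Finset.single_le_sum (f := F η) (fun _ _ => dirE_term_nonneg h _ _) (Finset.mem_univ η')
    _ ≤ ∑ a, ∑ b, F a b := Finset.single_le_sum (f := fun a => ∑ b, F a b)
        (fun _ _ => Finset.sum_nonneg fun _ _ => dirE_term_nonneg h _ _) (Finset.mem_univ η)

lemma capB_ge_of_isPathW (hβ : 0 ≤ β) {A B : Set X} (hAB : Disjoint A B) {a t : X}
    (ha : a ∈ A) (ht : t ∈ B) {L : ℕ} {ω : ℕ → X} (hp : IsPathW rel a t L ω) :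
    Real.exp (-β * pathMax H L ω) / Zb H β / (2 * L ^ 2) ≤ capB rel H β A B := by
  have hL : L ≠ 0 := hp.ne_zero (hAB.ne_of_mem ha ht)
  have : Nonempty X := ⟨a⟩
  refine le_csInf ⟨_, fun ξ => if ξ ∈ A then 1 else 0,
    fun ξ => by dsimp only; split_ifs <;> norm_num,
    fun ξ hξ => if_pos hξ, fun ξ hξ => if_neg (hAB.notMem_of_mem_right hξ), rfl⟩ ?_
  rintro e ⟨h, -, hA, hB, rfl⟩
  obtain ⟨i, hi, hdrop⟩ := exists_lt_le_sub_succ (h ∘ ω) hL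
  simp only [Function.comp_apply, hp.1, hp.2.1, hA a ha, hB t ht, sub_zero] at hdrop
  have hexp : Real.exp (-β * pathMax H L ω) ≤ Real.exp (-β * max (H (ω i)) (H (ω (i + 1)))) :=
    Real.exp_le_exp.2 (mul_le_mul_of_nonpos_left
      (max_le (le_pathMax H ω hi.le) (le_pathMax H ω hi)) (neg_nonpos.2 hβ))
  have hsq : (1 / L : ℝ) ^ 2 ≤ (h (ω i) - h (ω (i + 1))) ^ 2 :=
    pow_le_pow_left₀ (by positivity) hdrop 2
  refine le_trans ?_ (exp_mul_sq_le_dirE h (hp.2.2 i hi))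
  calc Real.exp (-β * pathMax H L ω) / Zb H β / (2 * L ^ 2)
      = Real.exp (-β * pathMax H L ω) / Zb H β * (1 / L) ^ 2 / 2 := by ring
    _ ≤ _ := by have := Zb_pos H β; gcongr

lemma dirE_term_indicator_valley_le (hsymm : Symmetric rel) (hconn : ConnGraph rel)
    (hβ : 0 ≤ β) (a : X) (Γ : ℝ) (η η' : X) :
    gibbs H β η * crate rel H β η η' *
        ((valley rel H a Γ).indicator 1 η - (valley rel H a Γ).indicator 1 η') ^ 2 ≤
      Real.exp (-β * Γ) / Zb H β := by
  set K := valley rel H a Γ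
  have : Nonempty X := ⟨a⟩
  have hZ := Zb_pos H β
  by_cases hr : rel η η'
  swap
  · simp only [crate, if_neg hr, mul_zero, zero_mul]
    positivity
  have hcut : (η ∈ K ↔ η' ∈ K) ∨ Γ ≤ max (H η) (H η') := by
    by_cases hη : η ∈ K <;> by_cases hη' : η' ∈ K
    · simp [hη, hη']
    · exact .inr (le_max_of_rel_of_mem_valley hconn hr hη hη')
    · exact .inr (max_comm (H η) _ ▸ le_max_of_rel_of_mem_valley hconn (hsymm hr) hη' hη)
    · simp [hη, hη']
  rcases hcut with hiff | hΓ
  · rw [show K.indicator 1 η = K.indicator (1 : X → ℝ) η' by simp [Set.indicator, hiff],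
      sub_self, zero_pow two_ne_zero, mul_zero]
    positivity
  rw [gibbs_mul_crate hr]
  calc Real.exp (-β * max (H η) (H η')) / Zb H β * (K.indicator 1 η - K.indicator 1 η') ^ 2
      ≤ Real.exp (-β * max (H η) (H η')) / Zb H β :=
        mul_le_of_le_one_right (by positivity) (by simp only [Set.indicator]; split_ifs <;> simp)
    _ ≤ Real.exp (-β * Γ) / Zb H β := div_le_div_of_nonneg_right
        (Real.exp_le_exp.2 (mul_le_mul_of_nonpos_left hΓ (neg_nonpos.2 hβ))) hZ.le

lemma capB_le_card_sq_mul_exp (hsymm : Symmetric rel) (hconn : ConnGraph rel) (hβ : 0 ≤ β)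
    {a b : X} (hab : a ≠ b) :
    capB rel H β {a} {b} ≤ Fintype.card X ^ 2 * (Real.exp (-β * commH rel H a b) / Zb H β) := by
  set Γ := commH rel H a b
  set K := valley rel H a Γ
  have : Nonempty X := ⟨a⟩
  have hb : b ∉ K := by simp [K, valley, hab.symm, Γ]
  calc capB rel H β {a} {b} ≤ dirE rel H β (K.indicator 1) := capB_le_dirE
        (fun ξ => by simp only [Set.indicator]; split_ifs <;> simp)
        (by rintro ξ rfl; simp [K, valley])
        (by rintro ξ rfl; simp [hb])
    _ ≤ 1 / 2 * ∑ _η : X, ∑ _η' : X, Real.exp (-β * Γ) / Zb H β := by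
        unfold dirE
        gcongr with η _ η' _
        exact dirE_term_indicator_valley_le hsymm hconn hβ a Γ η η'
    _ ≤ _ := by
        simp only [Finset.sum_const, Finset.card_univ, nsmul_eq_mul]
        nlinarith [show 0 ≤ Real.exp (-β * Γ) / Zb H β by have := Zb_pos H β; positivity,
          show (0 : ℝ) ≤ Fintype.card X by positivity]

end Capacity

section Metastability

variable [Fintype X] {rel : X → X → Prop} {H : X → ℝ}

lemma exists_gibbs_div_capB_le (hconn : ConnGraph rel) {A B : Set X} (hAB : Disjoint A B)
    {a t : X} (ha : a ∈ A) (ht : t ∈ B) :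
    ∃ C, 0 ≤ C ∧ ∀ β, 0 ≤ β →
      gibbs H β a / capB rel H β A B ≤ C * Real.exp (β * (commH rel H a t - H a)) := by
  obtain ⟨L, ω, hp, hm⟩ := exists_isPathW_pathMax_eq_commH (H := H) hconn a t
  have : Nonempty X := ⟨a⟩
  have hL : 0 < L := Nat.pos_of_ne_zero (hp.ne_zero (hAB.ne_of_mem ha ht))
  refine ⟨2 * L ^ 2, by positivity, fun β hβ => ?_⟩
  have hcap := capB_ge_of_isPathW (H := H) hβ hAB ha ht hp
  rw [hm] at hcap
  have hZ := Zb_pos H β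
  calc gibbs H β a / capB rel H β A B
      ≤ gibbs H β a / (Real.exp (-β * commH rel H a t) / Zb H β / (2 * L ^ 2)) :=
        div_le_div_of_nonneg_left (gibbs_nonneg H β a) (by positivity) hcap
    _ = 2 * L ^ 2 * Real.exp (β * (commH rel H a t - H a)) := by
        rw [gibbs, show β * (commH rel H a t - H a) = -β * H a - -β * commH rel H a t by ring,
          Real.exp_sub]
        field_simp

lemma exists_gibbs_div_capB_le_exp (hconn : ConnGraph rel) {S : Set X} {V : ℝ}
    (hreach : ∀ η ∉ S, ∃ t ∈ S, commH rel H η t ≤ H η + V) :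
    ∃ C, 0 ≤ C ∧ ∀ β, 0 ≤ β → ∀ η ∉ S,
      gibbs H β η / capB rel H β {η} S ≤ C * Real.exp (β * V) := by
  have hbound : ∀ η, ∃ C, 0 ≤ C ∧ ∀ β, 0 ≤ β → η ∉ S →
      gibbs H β η / capB rel H β {η} S ≤ C * Real.exp (β * V) := by
    intro η
    by_cases hηS : η ∈ S
    · exact ⟨0, le_rfl, fun _ _ h => absurd hηS h⟩
    obtain ⟨t, ht, hηt⟩ := hreach η hηS
    obtain ⟨C, hC0, hC⟩ :=
      exists_gibbs_div_capB_le (H := H) hconn (Set.disjoint_singleton_left.2 hηS) rfl ht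
    refine ⟨C, hC0, fun β hβ _ => (hC β hβ).trans ?_⟩
    gcongr
    linarith
  choose C _ hC using hbound
  obtain ⟨M, hM⟩ := Finite.exists_le C
  refine ⟨max M 0, le_max_right _ _, fun β hβ η hη => (hC η β hβ hη).trans ?_⟩
  gcongr
  exact (hM η).trans (le_max_left _ _)

lemma inv_card_sq_mul_exp_le_gibbs_div_capB (hsymm : Symmetric rel) (hconn : ConnGraph rel)
    {β : ℝ} (hβ : 0 ≤ β) {a b : X} (hab : a ≠ b) :
    ((Fintype.card X : ℝ) ^ 2)⁻¹ * Real.exp (β * (commH rel H a b - H a)) ≤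
      gibbs H β a / capB rel H β {a} {b} := by
  obtain ⟨L, ω, hp, -⟩ := exists_isPathW_pathMax_eq_commH (H := H) hconn a b
  have : Nonempty X := ⟨a⟩
  have hL : 0 < L := Nat.pos_of_ne_zero (hp.ne_zero hab)
  have hZ := Zb_pos H β
  have hcap : 0 < capB rel H β {a} {b} := lt_of_lt_of_le (by positivity)
    (capB_ge_of_isPathW hβ (Set.disjoint_singleton.2 hab) rfl rfl hp)
  rw [le_div_iff₀ hcap]
  calc ((Fintype.card X : ℝ) ^ 2)⁻¹ * Real.exp (β * (commH rel H a b - H a)) *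
        capB rel H β {a} {b}
      ≤ ((Fintype.card X : ℝ) ^ 2)⁻¹ * Real.exp (β * (commH rel H a b - H a)) *
        (Fintype.card X ^ 2 * (Real.exp (-β * commH rel H a b) / Zb H β)) := by
        gcongr
        exact capB_le_card_sq_mul_exp hsymm hconn hβ hab
    _ = gibbs H β a := by
        have : (Fintype.card X : ℝ) ≠ 0 := Nat.cast_ne_zero.2 Fintype.card_ne_zero
        rw [gibbs, show -β * H a = β * (commH rel H a b - H a) + -β * commH rel H a b by ring,
          Real.exp_add]
        field_simp

end Metastability

lemma tendsto_div_atTop_zero_of_le_exp {f g : ℝ → ℝ} {C c V Γ : ℝ} (hc : 0 < c) (hVΓ : V < Γ)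
    (hf₀ : ∀ᶠ β in atTop, 0 ≤ f β) (hf : ∀ᶠ β in atTop, f β ≤ C * Real.exp (β * V))
    (hg : ∀ᶠ β in atTop, c * Real.exp (β * Γ) ≤ g β) :
    Tendsto (fun β => f β / g β) atTop (nhds 0) := by
  have hlim : Tendsto (fun β => C / c * Real.exp (β * (V - Γ))) atTop (nhds 0) := by
    simpa using ((Real.tendsto_exp_atBot.comp
      (tendsto_id.atTop_mul_const_of_neg (sub_neg.2 hVΓ))).const_mul (C / c))
  refine squeeze_zero' ?_ ?_ hlim
  · filter_upwards [hf₀, hg] with β hf₀ hg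
    exact div_nonneg hf₀ ((by positivity : 0 ≤ c * Real.exp (β * Γ)).trans hg)
  · filter_upwards [hf₀, hf, hg] with β hf₀ hf hg
    calc f β / g β ≤ C * Real.exp (β * V) / (c * Real.exp (β * Γ)) :=
          div_le_div₀ (hf₀.trans hf) hf (by positivity) hg
      _ = C / c * Real.exp (β * (V - Γ)) := by
          rw [mul_sub, Real.exp_sub]
          field_simp

theorem stmt_15_general [Fintype X] (rel : X → X → Prop) (H : X → ℝ)
    (hsymm : Symmetric rel) (hconn : ConnGraph rel)
    (sq bx : X) (hne : sq ≠ bx)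
    -- (H1): X_stab = {⊞}
    (hH1 : {η : X | ∀ ξ, H η ≤ H ξ} = {bx})
    -- (H2): ∃ V* < Γ* with V_η ≤ V* for all η ∉ {□,⊞}
    (hH2 : ∃ Vs : ℝ, Vs < commH rel H sq bx - H sq ∧
      ∀ η : X, η ≠ sq → η ≠ bx →
        ({ξ : X | H ξ < H η}).Nonempty ∧
        commHS rel H {η} {ξ : X | H ξ < H η} - H η ≤ Vs) :
    Tendsto (fun β : ℝ =>
      sSup { r : ℝ | ∃ η : X, η ≠ sq ∧ η ≠ bx ∧
          r = gibbs H β η / capB rel H β {η} {sq, bx} } /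
      min (gibbs H β sq / capB rel H β {sq} {bx})
          (gibbs H β bx / capB rel H β {bx} {sq}))
      atTop (nhds 0) := by
  obtain ⟨V, hV, hstab⟩ := hH2
  have hreach : ∀ η ∉ ({sq, bx} : Set X), ∃ t ∈ ({sq, bx} : Set X),
      commH rel H η t ≤ H η + V := by
    refine exists_mem_commH_le_add hconn fun η hη => ?_
    simp only [Set.mem_insert_iff, Set.mem_singleton_iff, not_or] at hη
    obtain ⟨hlower, hV⟩ := hstab η hη.1 hη.2
    obtain ⟨ξ, hξ, hΦ⟩ := exists_commH_eq_commHS η hlower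
    exact ⟨ξ, hξ, by linarith⟩
  obtain ⟨C, hC0, hC⟩ := exists_gibbs_div_capB_le_exp hconn hreach
  have hHbx : H bx ≤ H sq := (hH1.symm ▸ rfl : bx ∈ {η : X | ∀ ξ, H η ≤ H ξ}) sq
  have : 0 < Fintype.card X := Fintype.card_pos_iff.2 ⟨sq⟩
  refine tendsto_div_atTop_zero_of_le_exp (C := C) (c := ((Fintype.card X : ℝ) ^ 2)⁻¹)
    (by positivity) hV ?_ ?_ ?_ <;>
    filter_upwards [eventually_ge_atTop 0] with β hβ
  · refine Real.sSup_nonneg ?_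
    rintro _ ⟨η, -, -, rfl⟩
    exact div_nonneg (gibbs_nonneg H β η) (capB_nonneg rel H β _ _)
  · refine Real.sSup_le ?_ (by positivity)
    rintro _ ⟨η, hηsq, hηbx, rfl⟩
    exact hC β hβ η (by simp [hηsq, hηbx])
  · refine le_min (inv_card_sq_mul_exp_le_gibbs_div_capB hsymm hconn hβ hne) ?_
    refine le_trans ?_ (inv_card_sq_mul_exp_le_gibbs_div_capB hsymm hconn hβ hne.symm)
    rw [commH_comm hsymm hconn bx sq]
    gcongr

/-- under (H1)–(H2), {□,⊞} is a metastable set in the sense of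
Bovier–Eckhoff–Gayrard–Klein: the ratio of the maximal μ_β(η)/CAP_β(η,{□,⊞})
over η ∉ {□,⊞} to the minimal μ_β(η)/CAP_β(η,{□,⊞}∖{η}) over η ∈ {□,⊞}
tends to 0 as β → ∞. -/
theorem stmt_15 [Fintype X] (rel : X → X → Prop) (H : X → ℝ)
    (hsymm : Symmetric rel) (hconn : ConnGraph rel)
    (sq bx : X) (hne : sq ≠ bx) (Hsq : H sq = 0)
    -- (H1): X_stab = {⊞}
    (hH1 : {η : X | ∀ ξ, H η ≤ H ξ} = {bx})
    -- (H2): ∃ V* < Γ* with V_η ≤ V* for all η ∉ {□,⊞}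
    (hH2 : ∃ Vs : ℝ, Vs < commH rel H sq bx - H sq ∧
      ∀ η : X, η ≠ sq → η ≠ bx →
        ({ξ : X | H ξ < H η}).Nonempty ∧
        commHS rel H {η} {ξ : X | H ξ < H η} - H η ≤ Vs) :
    Tendsto (fun β : ℝ =>
      sSup { r : ℝ | ∃ η : X, η ≠ sq ∧ η ≠ bx ∧
          r = gibbs H β η / capB rel H β {η} {sq, bx} } /
      min (gibbs H β sq / capB rel H β {sq} {bx})
          (gibbs H β bx / capB rel H β {bx} {sq}))
      atTop (nhds 0) :=
  stmt_15_general rel H hsymm hconn sq bx hne hH1 hH2
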